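/- arXiv:1310.6390 — 2 statements merged into one kernel-verified Lean document; each statement's English description precedes it below -/
import Mathlib

section
/- Let $\mathfrak{u}$ be a finite-dimensional nilpotent Lie algebra over $\mathbb{R}$ and $X : \mathfrak{u} \to \mathfrak{u}$ a derivation which is diagonalizable with all eigenvalues non-negative. Form the solvable Lie algebra $\mathfrak{g} = \mathbb{R}X \ltimes \mathfrak{u}$. Then the orbit of $X$ under the group $e^{\operatorname{ad}\mathfrak{u}}$ equals the affine subspace $X + [X,\mathfrak{u}]$, i.e. $e^{\operatorname{ad}\mathfrak{u}} X = X + [X,\mathfrak{u}]$. -/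
/-- The (truncated) exponential of an endomorphism of a finite-dimensional real
vector space; for a nilpotent endomorphism (whose nilpotency index is at most
the dimension) this is the genuine exponential `e^f`. -/
noncomputable def expNil {V : Type*} [AddCommGroup V] [Module ℝ V] (f : Module.End ℝ V) :
    Module.End ℝ V :=
  ∑ i ∈ Finset.range (Module.finrank ℝ V + 1), ((i.factorial : ℝ)⁻¹) • f ^ i


namespace ExpAdOrbitAux

variable {g : Type*} [LieRing g] [LieAlgebra ℝ g]
variable {u : LieIdeal ℝ g} (X : g) {ι : Type} (b : Module.Basis ι ℝ u) (ev : ι → ℝ)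

/-- Span of basis eigenvectors with eigenvalue `> t`. -/
def F (t : ℝ) : Submodule ℝ g :=
  Submodule.span ℝ {x | ∃ i, t < ev i ∧ x = (b i : g)}

/-- Span of basis eigenvectors with eigenvalue `≥ s`. -/
def G (s : ℝ) : Submodule ℝ g :=
  Submodule.span ℝ {x | ∃ i, s ≤ ev i ∧ x = (b i : g)}

lemma F_mono {s t : ℝ} (h : s ≤ t) : F b ev t ≤ F b ev s :=
  Submodule.span_mono (by rintro x ⟨i, hi, rfl⟩; exact ⟨i, lt_of_le_of_lt h hi, rfl⟩)

lemma F_le_G (s : ℝ) : F b ev s ≤ G b ev s :=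
  Submodule.span_mono (by rintro x ⟨i, hi, rfl⟩; exact ⟨i, le_of_lt hi, rfl⟩)

lemma F_le_u (t : ℝ) : F b ev t ≤ (u : Submodule ℝ g) := by
  rw [F, Submodule.span_le]
  rintro x ⟨i, _, rfl⟩
  exact (b i).2

lemma u_le_G [Fintype ι] (h0 : ∀ i, 0 ≤ ev i) : (u : Submodule ℝ g) ≤ G b ev 0 := by
  intro v hv
  have hsum : v = ∑ i, b.repr ⟨v, hv⟩ i • (b i : g) := by
    have := congrArg (fun w : u => (w : g)) (b.sum_repr ⟨v, hv⟩)
    exact this.symm.trans (by push_cast; rfl)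
  rw [hsum]
  exact Submodule.sum_mem _ fun i _ =>
    Submodule.smul_mem _ _ (Submodule.subset_span ⟨i, h0 i, rfl⟩)

lemma eigvec_mem [Fintype ι] (hbr : ∀ i, ⁅X, (b i : g)⁆ = ev i • (b i : g))
    (w : u) (μ t : ℝ) (hw : ⁅X, (w : g)⁆ = μ • (w : g)) (ht : t < μ) :
    (w : g) ∈ F b ev t := by
  classical
  let D : u →ₗ[ℝ] u :=
    { toFun := fun v => ⟨⁅X, (v : g)⁆, u.lie_mem v.2⟩
      map_add' := by intro a c; ext; simp
      map_smul' := by intro r a; ext; simp }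
  have hD : ∀ i, D (b i) = ev i • b i := by
    intro i; ext; simpa [D] using hbr i
  have hDw : D w = μ • w := by ext; simpa [D] using hw
  have hcoord : ∀ v : u, ∀ i, b.repr (D v) i = ev i * b.repr v i := by
    intro v i
    have h1 : (b.coord i).comp D = (ev i) • b.coord i := by
      apply b.ext
      intro j
      by_cases hji : j = i
      · subst hji
        simp [hD j, Module.Basis.coord_apply]
      · simp [hD j, Module.Basis.coord_apply, Module.Basis.repr_self, Finsupp.single_apply, hji]
    have := congrFun (congrArg (fun f : u →ₗ[ℝ] ℝ => (f : u → ℝ)) h1) v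
    simpa [Module.Basis.coord_apply] using this
  have hsupp : ∀ i, b.repr w i ≠ 0 → ev i = μ := by
    intro i hne
    have h2 : ev i * b.repr w i = μ * b.repr w i := by
      rw [← hcoord w i, hDw]
      simp
    have := mul_right_cancel₀ hne h2
    exact this
  have hsum : (w : g) = ∑ i, b.repr w i • (b i : g) := by
    have := congrArg (fun v : u => (v : g)) (b.sum_repr w)
    exact this.symm.trans (by push_cast; rfl)
  rw [hsum]
  refine Submodule.sum_mem _ fun i _ => ?_
  by_cases hzero : b.repr w i = 0
  · rw [hzero, zero_smul]; exact Submodule.zero_mem _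
  · exact Submodule.smul_mem _ _ (Submodule.subset_span ⟨i, by rw [hsupp i hzero]; exact ht, rfl⟩)


variable [Fintype ι]

lemma bracket_mem (hbr : ∀ i, ⁅X, (b i : g)⁆ = ev i • (b i : g))
    {s t : ℝ} {v w : g} (hv : v ∈ G b ev s) (hw : w ∈ F b ev t) :
    ⁅v, w⁆ ∈ F b ev (s + t) := by
  induction hv using Submodule.span_induction with
  | mem x hx =>
    obtain ⟨j, hj, rfl⟩ := hx
    induction hw using Submodule.span_induction with
    | mem y hy =>
      obtain ⟨i, hi, rfl⟩ := hy
      have hz : ⁅(b j : g), (b i : g)⁆ ∈ u := u.lie_mem (b i).2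
      have heig : ⁅X, ⁅(b j : g), (b i : g)⁆⁆ = (ev j + ev i) • ⁅(b j : g), (b i : g)⁆ := by
        rw [leibniz_lie, hbr j, hbr i, smul_lie, lie_smul, add_smul]
      exact eigvec_mem X b ev hbr ⟨_, hz⟩ (ev j + ev i) (s + t) heig
        (add_lt_add_of_le_of_lt hj hi)
    | zero => rw [lie_zero]; exact Submodule.zero_mem _
    | add y z _ _ hy hz => rw [lie_add]; exact Submodule.add_mem _ hy hz
    | smul r y _ hy => rw [lie_smul]; exact Submodule.smul_mem _ _ hy
  | zero => rw [zero_lie]; exact Submodule.zero_mem _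
  | add x y _ _ hx hy => rw [add_lie]; exact Submodule.add_mem _ hx hy
  | smul r x _ hx => rw [smul_lie]; exact Submodule.smul_mem _ _ hx

lemma lie_X_mem (hbr : ∀ i, ⁅X, (b i : g)⁆ = ev i • (b i : g))
    {t : ℝ} {w : g} (hw : w ∈ F b ev t) : ⁅X, w⁆ ∈ F b ev t := by
  induction hw using Submodule.span_induction with
  | mem x hx =>
    obtain ⟨i, hi, rfl⟩ := hx
    rw [hbr i]
    exact Submodule.smul_mem _ _ (Submodule.subset_span ⟨i, hi, rfl⟩)
  | zero => rw [lie_zero]; exact Submodule.zero_mem _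
  | add y z _ _ hy hz => rw [lie_add]; exact Submodule.add_mem _ hy hz
  | smul r y _ hy => rw [lie_smul]; exact Submodule.smul_mem _ _ hy

lemma lie_X_u_mem (h0 : ∀ i, 0 ≤ ev i) (hbr : ∀ i, ⁅X, (b i : g)⁆ = ev i • (b i : g))
    {W : g} (hW : W ∈ u) : ⁅X, W⁆ ∈ F b ev 0 := by
  have hWG : W ∈ G b ev 0 := u_le_G b ev h0 hW
  clear hW
  induction hWG using Submodule.span_induction with
  | mem x hx =>
    obtain ⟨i, _, rfl⟩ := hx
    rw [hbr i]
    rcases (h0 i).lt_or_eq with h | h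
    · exact Submodule.smul_mem _ _ (Submodule.subset_span ⟨i, h, rfl⟩)
    · rw [← h, zero_smul]; exact Submodule.zero_mem _
  | zero => rw [lie_zero]; exact Submodule.zero_mem _
  | add y z _ _ hy hz => rw [lie_add]; exact Submodule.add_mem _ hy hz
  | smul r y _ hy => rw [lie_smul]; exact Submodule.smul_mem _ _ hy

lemma solve (hbr : ∀ i, ⁅X, (b i : g)⁆ = ev i • (b i : g))
    {c : ℝ} (hc : 0 ≤ c) {E : g} (hE : E ∈ F b ev c) :
    ∃ V ∈ F b ev c, ⁅X, V⁆ = E := by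
  induction hE using Submodule.span_induction with
  | mem x hx =>
    obtain ⟨i, hi, rfl⟩ := hx
    have hne : ev i ≠ 0 := ne_of_gt (lt_of_le_of_lt hc hi)
    refine ⟨(ev i)⁻¹ • (b i : g),
      Submodule.smul_mem _ _ (Submodule.subset_span ⟨i, hi, rfl⟩), ?_⟩
    rw [lie_smul, hbr i, smul_smul, inv_mul_cancel₀ hne, one_smul]
  | zero => exact ⟨0, Submodule.zero_mem _, lie_zero X⟩
  | add y z _ _ hy hz =>
    obtain ⟨V₁, hV₁, hV₁X⟩ := hy
    obtain ⟨V₂, hV₂, hV₂X⟩ := hz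
    exact ⟨V₁ + V₂, Submodule.add_mem _ hV₁ hV₂, by rw [lie_add, hV₁X, hV₂X]⟩
  | smul r y _ hy =>
    obtain ⟨V, hV, hVX⟩ := hy
    exact ⟨r • V, Submodule.smul_mem _ _ hV, by rw [lie_smul, hVX]⟩

lemma F0_le_image (hbr : ∀ i, ⁅X, (b i : g)⁆ = ev i • (b i : g))
    {v : g} (hv : v ∈ F b ev 0) : ∃ W ∈ u, v = ⁅X, W⁆ := by
  obtain ⟨V, hV, hVX⟩ := solve X b ev hbr le_rfl hv
  exact ⟨V, F_le_u b ev 0 hV, hVX.symm⟩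

lemma F_bot (h0 : ∀ i, 0 ≤ ev i) {t : ℝ} (ht : ∀ i, ev i ≤ t) : F b ev t = ⊥ := by
  rw [F, Submodule.span_eq_bot]
  rintro x ⟨i, hi, rfl⟩
  exact absurd hi (not_lt.mpr (ht i))


end ExpAdOrbitAux


namespace ExpAdOrbitAux

variable {g : Type*} [LieRing g] [LieAlgebra ℝ g]
variable (X : g) {u : LieIdeal ℝ g} {ι : Type} (b : Module.Basis ι ℝ u) (ev : ι → ℝ)

/-- The truncated exponential of `ad U` applied to `X`, with `N+1` terms. -/
noncomputable def psi (N : ℕ) (U : g) : g :=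
  ∑ k ∈ Finset.range (N + 1), ((k.factorial : ℝ)⁻¹) • ((LieAlgebra.ad ℝ g U) ^ k) X

lemma ad_pow_succ (U z : g) (k : ℕ) :
    ((LieAlgebra.ad ℝ g U) ^ (k + 1)) z = ⁅U, ((LieAlgebra.ad ℝ g U) ^ k) z⁆ := by
  rw [pow_succ', Module.End.mul_apply, LieAlgebra.ad_apply]

lemma psi_zero (N : ℕ) : psi X N 0 = X := by
  rw [psi, Finset.sum_range_succ']
  simp

lemma expNil_eq_psi [Module.Finite ℝ g] (U : g) :
    expNil (LieAlgebra.ad ℝ g U) X = psi X (Module.finrank ℝ g) U := by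
  simp [expNil, psi, LinearMap.sum_apply, LinearMap.smul_apply]


variable [Fintype ι]

lemma psi_sub_X_mem (h0 : ∀ i, 0 ≤ ev i) (hbr : ∀ i, ⁅X, (b i : g)⁆ = ev i • (b i : g))
    {N : ℕ} {U : g} (hU : U ∈ u) : psi X N U - X ∈ F b ev 0 := by
  have hpow : ∀ k : ℕ, ((LieAlgebra.ad ℝ g U) ^ (k + 1)) X ∈ F b ev 0 := by
    intro k
    induction k with
    | zero =>
      rw [ad_pow_succ, pow_zero]
      have h1 : ((1 : Module.End ℝ g)) X = X := rfl
      rw [h1]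
      have h2 : ⁅U, X⁆ = -⁅X, U⁆ := (lie_skew U X).symm
      rw [h2]
      exact Submodule.neg_mem _ (lie_X_u_mem X b ev h0 hbr hU)
    | succ m ih =>
      rw [ad_pow_succ]
      have := bracket_mem X b ev hbr (u_le_G b ev h0 hU) ih
      simpa using this
  have hsplit : psi X N U
      = (∑ k ∈ Finset.range N, (((k+1).factorial : ℝ)⁻¹) • ((LieAlgebra.ad ℝ g U) ^ (k+1)) X)
        + X := by
    rw [psi, Finset.sum_range_succ']
    simp
  rw [hsplit, add_sub_cancel_right]
  exact Submodule.sum_mem _ fun k _ => Submodule.smul_mem _ _ (hpow k)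

lemma step (h0 : ∀ i, 0 ≤ ev i) (hbr : ∀ i, ⁅X, (b i : g)⁆ = ev i • (b i : g))
    {β : ℝ} (hβ : 0 < β) (hF0β : F b ev 0 ≤ F b ev β)
    {c : ℝ} (hc : 0 ≤ c) (Nm : ℕ) {Z U : g} (hU : U ∈ F b ev 0)
    (hE : X + Z - psi X (Nm + 1) U ∈ F b ev c) :
    ∃ U' ∈ F b ev 0, X + Z - psi X (Nm + 1) U' ∈ F b ev (c + β) := by
  obtain ⟨V, hVF, hVX⟩ := solve X b ev hbr hc (Submodule.neg_mem _ hE)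
  have hVXE : ⁅V, X⁆ = X + Z - psi X (Nm + 1) U := by
    have h2 : ⁅V, X⁆ = -⁅X, V⁆ := (lie_skew V X).symm
    rw [h2, hVX, neg_neg]
  have hU' : U + V ∈ F b ev 0 := Submodule.add_mem _ hU (F_mono b ev hc hVF)
  have hUG : U ∈ G b ev β := F_le_G b ev β (hF0β hU)
  have hU'G : U + V ∈ G b ev β := F_le_G b ev β (hF0β hU')
  have hVG : V ∈ G b ev c := F_le_G b ev c hVF
  have hB : ∀ k : ℕ, ((LieAlgebra.ad ℝ g U) ^ (k + 1)) X ∈ F b ev ((k : ℝ) * β + β) := by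
    intro k
    induction k with
    | zero =>
      rw [ad_pow_succ, pow_zero]
      have h1 : ((1 : Module.End ℝ g)) X = X := rfl
      rw [h1]
      have h2 : ⁅U, X⁆ = -⁅X, U⁆ := (lie_skew U X).symm
      rw [h2]
      have hXU : ⁅X, U⁆ ∈ F b ev β := lie_X_mem X b ev hbr (hF0β hU)
      simpa using Submodule.neg_mem _ hXU
    | succ m ih =>
      rw [ad_pow_succ]
      have h3 := bracket_mem X b ev hbr hUG ih
      have heq : β + ((m : ℝ) * β + β) = ((m + 1 : ℕ) : ℝ) * β + β := by push_cast; ring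
      rwa [heq] at h3
  have hD : ∀ k : ℕ,
      ((LieAlgebra.ad ℝ g (U + V)) ^ (k + 1)) X - ((LieAlgebra.ad ℝ g U) ^ (k + 1)) X
        ∈ F b ev (c + (k : ℝ) * β) := by
    intro k
    induction k with
    | zero =>
      have h1 : ((LieAlgebra.ad ℝ g (U + V)) ^ 1) X - ((LieAlgebra.ad ℝ g U) ^ 1) X
          = ⁅V, X⁆ := by
        rw [pow_one, pow_one, LieAlgebra.ad_apply, LieAlgebra.ad_apply, add_lie]
        abel
      rw [h1, hVXE]
      simpa using hE
    | succ m ih =>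
      have alg : ∀ x y : g, ⁅U + V, x⁆ - ⁅U, y⁆ = ⁅U + V, x - y⁆ + ⁅V, y⁆ := by
        intro x y
        simp only [lie_sub, add_lie]
        abel
      rw [ad_pow_succ (U + V) X (m + 1), ad_pow_succ U X (m + 1), alg]
      have h2 := bracket_mem X b ev hbr hU'G ih
      have h3 := bracket_mem X b ev hbr hVG (hB m)
      have he2 : β + (c + (m : ℝ) * β) = c + ((m + 1 : ℕ) : ℝ) * β := by push_cast; ring
      have he3 : c + ((m : ℝ) * β + β) = c + ((m + 1 : ℕ) : ℝ) * β := by push_cast; ring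
      rw [he2] at h2
      rw [he3] at h3
      exact Submodule.add_mem _ h2 h3
  refine ⟨U + V, hU', ?_⟩
  set f : ℕ → g := fun k => ((k.factorial : ℝ)⁻¹) •
      (((LieAlgebra.ad ℝ g (U + V)) ^ k) X - ((LieAlgebra.ad ℝ g U) ^ k) X) with hf
  have hdiff : psi X (Nm + 1) (U + V) - psi X (Nm + 1) U
      = ∑ k ∈ Finset.range (Nm + 1 + 1), f k := by
    rw [psi, psi, ← Finset.sum_sub_distrib]
    exact Finset.sum_congr rfl fun k _ => (smul_sub _ _ _).symm
  have hpeel : ∑ k ∈ Finset.range (Nm + 1 + 1), f k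
      = ((∑ k ∈ Finset.range Nm, f (k + 1 + 1)) + f 1) + f 0 := by
    rw [Finset.sum_range_succ' f (Nm + 1), Finset.sum_range_succ' (fun k => f (k + 1)) Nm]
  have hf0 : f 0 = 0 := by simp [hf]
  have hf1 : f 1 = ⁅V, X⁆ := by
    simp only [hf, pow_one, Nat.factorial_one, Nat.cast_one, inv_one, one_smul,
      LieAlgebra.ad_apply]
    rw [add_lie]
    abel
  have hT : (∑ k ∈ Finset.range Nm, f (k + 1 + 1)) ∈ F b ev (c + β) := by
    refine Submodule.sum_mem _ fun k _ => Submodule.smul_mem _ _ ?_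
    have h4 := hD (k + 1)
    have hle : c + β ≤ c + ((k + 1 : ℕ) : ℝ) * β := by
      have hk1 : (1 : ℝ) ≤ ((k + 1 : ℕ) : ℝ) := by exact_mod_cast Nat.one_le_iff_ne_zero.mpr (Nat.succ_ne_zero k)
      nlinarith
    exact F_mono b ev hle h4
  have hES : X + Z - psi X (Nm + 1) (U + V)
      = (X + Z - psi X (Nm + 1) U) - (psi X (Nm + 1) (U + V) - psi X (Nm + 1) U) := by abel
  rw [hES, hdiff, hpeel, hf0, add_zero, hf1, hVXE]
  have hfin : (X + Z - psi X (Nm + 1) U)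
      - ((∑ k ∈ Finset.range Nm, f (k + 1 + 1)) + (X + Z - psi X (Nm + 1) U))
      = -(∑ k ∈ Finset.range Nm, f (k + 1 + 1)) := by abel
  rw [hfin]
  exact Submodule.neg_mem _ hT

lemma iter (h0 : ∀ i, 0 ≤ ev i) (hbr : ∀ i, ⁅X, (b i : g)⁆ = ev i • (b i : g))
    {β : ℝ} (hβ : 0 < β) (hF0β : F b ev 0 ≤ F b ev β)
    (Nm : ℕ) {Z : g} (hZ : Z ∈ F b ev 0) (n : ℕ) :
    ∃ U ∈ F b ev 0, X + Z - psi X (Nm + 1) U ∈ F b ev ((n : ℝ) * β) := by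
  induction n with
  | zero =>
    refine ⟨0, Submodule.zero_mem _, ?_⟩
    rw [psi_zero]
    have h1 : X + Z - X = Z := by abel
    rw [h1]
    simpa using hZ
  | succ m ih =>
    obtain ⟨U, hU, hE⟩ := ih
    obtain ⟨U', hU', hE'⟩ := step X b ev h0 hbr hβ hF0β
      (mul_nonneg (Nat.cast_nonneg m) hβ.le) Nm hU hE
    refine ⟨U', hU', ?_⟩
    have heq : (m : ℝ) * β + β = ((m + 1 : ℕ) : ℝ) * β := by push_cast; ring
    rwa [heq] at hE'

end ExpAdOrbitAux
open ExpAdOrbitAux in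
/-- Let `𝔲` be a finite-dimensional real nilpotent Lie algebra and `X` a derivation of `𝔲`,
diagonalizable with non-negative eigenvalues.  In the solvable Lie algebra
`𝔤 = ℝX ⋉ 𝔲` one has `e^{ad 𝔲} X = X + [X, 𝔲]`. -/
theorem exp_ad_orbit_eq_affine
    {g : Type*} [LieRing g] [LieAlgebra ℝ g] [Module.Finite ℝ g]
    (u : LieIdeal ℝ g) (X : g)
    -- `𝔤 = ℝ X ⋉ 𝔲` as vector spaces:
    (hspan : Submodule.span ℝ {X} ⊔ (u : Submodule ℝ g) = ⊤)
    (hdisj : Submodule.span ℝ {X} ⊓ (u : Submodule ℝ g) = ⊥)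
    -- `𝔲` is a nilpotent Lie algebra:
    (hnil : LieRing.IsNilpotent u)
    -- `ad X : 𝔲 → 𝔲` is diagonalizable with non-negative eigenvalues:
    (hdiag : ∃ (ι : Type) (b : Module.Basis ι ℝ u) (ev : ι → ℝ),
      (∀ i, 0 ≤ ev i) ∧ ∀ i, ⁅X, (b i : g)⁆ = ev i • (b i : g)) :
    {y : g | ∃ U ∈ u, y = expNil (LieAlgebra.ad ℝ g U) X} =
      {y : g | ∃ W ∈ u, y = X + ⁅X, W⁆} := by
  classical
  obtain ⟨ι, b, ev, h0, hbr⟩ := hdiag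
  haveI : FiniteDimensional ℝ u := inferInstance
  haveI : Fintype ι := FiniteDimensional.fintypeBasisIndex b
  rcases subsingleton_or_nontrivial g with hss | hnt
  · ext y
    simp only [Set.mem_setOf_eq]
    constructor
    · rintro ⟨U, hU, rfl⟩
      exact ⟨0, u.zero_mem, Subsingleton.elim _ _⟩
    · rintro ⟨W, hW, rfl⟩
      exact ⟨0, u.zero_mem, Subsingleton.elim _ _⟩
  obtain ⟨Nm, hNm⟩ : ∃ m, Module.finrank ℝ g = m + 1 :=
    ⟨Module.finrank ℝ g - 1, (Nat.succ_pred_eq_of_pos Module.finrank_pos).symm⟩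
  obtain ⟨α, hα0, hαle⟩ : ∃ α > 0, ∀ i, 0 < ev i → α ≤ ev i := by
    by_cases hne : (Finset.univ.filter fun i => 0 < ev i).Nonempty
    · refine ⟨Finset.inf' _ hne ev, ?_,
        fun i hi => Finset.inf'_le ev (Finset.mem_filter.mpr ⟨Finset.mem_univ i, hi⟩)⟩
      exact (Finset.lt_inf'_iff _).2 fun i hi => (Finset.mem_filter.mp hi).2
    · exact ⟨1, one_pos,
        fun i hi => absurd (Finset.mem_filter.mpr ⟨Finset.mem_univ i, hi⟩) fun h => hne ⟨i, h⟩⟩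
  have hβ : 0 < α / 2 := half_pos hα0
  have hF0β : F b ev 0 ≤ F b ev (α / 2) := by
    rw [F, Submodule.span_le]
    rintro x ⟨i, hi, rfl⟩
    exact Submodule.subset_span ⟨i, lt_of_lt_of_le (half_lt_self hα0) (hαle i hi), rfl⟩
  ext y
  simp only [Set.mem_setOf_eq]
  constructor
  · rintro ⟨U, hU, rfl⟩
    have hmem : psi X (Module.finrank ℝ g) U - X ∈ F b ev 0 := psi_sub_X_mem X b ev h0 hbr hU
    obtain ⟨W, hW, hWeq⟩ := F0_le_image X b ev hbr hmem
    refine ⟨W, hW, ?_⟩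
    rw [expNil_eq_psi, ← sub_eq_iff_eq_add']
    exact hWeq
  · rintro ⟨W, hW, rfl⟩
    have hZ : ⁅X, W⁆ ∈ F b ev 0 := lie_X_u_mem X b ev h0 hbr hW
    obtain ⟨n, hn⟩ : ∃ n : ℕ, (∑ i, ev i) < (n : ℝ) * (α / 2) := by
      obtain ⟨n, hn⟩ := exists_nat_gt ((∑ i, ev i) / (α / 2))
      exact ⟨n, (div_lt_iff₀ hβ).mp hn⟩
    obtain ⟨U, hU, hE⟩ := iter X b ev h0 hbr hβ hF0β Nm hZ n
    have hbot : F b ev ((n : ℝ) * (α / 2)) = ⊥ := F_bot b ev h0 fun i =>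
      le_of_lt (lt_of_le_of_lt (Finset.single_le_sum (fun j _ => h0 j) (Finset.mem_univ i)) hn)
    rw [hbot, Submodule.mem_bot] at hE
    refine ⟨U, F_le_u b ev 0 hU, ?_⟩
    rw [expNil_eq_psi, hNm]
    exact sub_eq_zero.mp hE
end

section
/- Let $\mathfrak{g}$ be a finite-dimensional Lie algebra over $\mathbb{R}$, $\mathfrak{h} \subseteq \mathfrak{g}$ a subalgebra, and let $X \in \mathfrak{g}$ decompose as $X = X_a + X_m$ where $\operatorname{ad}X_a$ and $\operatorname{ad}X_m$ commute, $\operatorname{ad}X_a$ is diagonalizable over $\mathbb{R}$ (real spectrum) and $\operatorname{ad}X_m$ is diagonalizable over $\mathbb{C}$ with purely imaginary spectrum. If $\operatorname{ad}X$ preserves $\mathfrak{h}$ (i.e. $[X,\mathfrak{h}] \subseteq \mathfrak{h}$), then $[X_a, \mathfrak{h}] \subseteq \mathfrak{h}$ and $[X_m, \mathfrak{h}] \subseteq \mathfrak{h}$. -/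
open LieAlgebra Polynomial Module
open scoped TensorProduct

/-- Polynomial functional calculus on an eigenvector. -/
lemma aux_aeval_apply_of_eigen {K V : Type*} [CommRing K] [AddCommGroup V] [Module K V]
    {f : Module.End K V} {μ : K} {m : V} (hm : f m = μ • m) (p : K[X]) :
    (Polynomial.aeval f) p m = p.eval μ • m := by
  have hpow : ∀ k : ℕ, (f ^ k) m = μ ^ k • m := by
    intro k
    induction k with
    | zero => simp
    | succ k ih =>
        rw [pow_succ', pow_succ', Module.End.mul_apply, ih, map_smul, hm, smul_smul,
          mul_comm μ (μ ^ k)]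
  induction p using Polynomial.induction_on' with
  | add p q hp hq => simp [hp, hq, add_smul]
  | monomial n c =>
      simp [Polynomial.aeval_monomial, Module.End.mul_apply, Module.algebraMap_end_apply,
        hpow, smul_smul, mul_comm]

/-- A diagonalizable endomorphism (in finite dimension) is finitely semisimple. -/
lemma aux_isFinitelySemisimple_of_iSup_eigenspace {K V ι : Type*} [Field K] [AddCommGroup V]
    [Module K V] [FiniteDimensional K V] {f : Module.End K V} (ν : ι → K)
    (h : ⨆ i, f.eigenspace (ν i) = ⊤) : f.IsFinitelySemisimple := by
  classical
  have hfin : {c : K | f.eigenspace c ≠ ⊥}.Finite :=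
    Submodule.finite_ne_bot_of_iSupIndep f.eigenspaces_iSupIndep
  set s : Finset K := hfin.toFinset with hs
  set p : K[X] := ∏ c ∈ s, (X - C c) with hp
  have hsq : Squarefree p := by
    refine (Polynomial.separable_prod_X_sub_C_iff'.2 ?_).squarefree
    exact fun x _ y _ hxy => hxy
  have haeval : Polynomial.aeval f p = 0 := by
    have hker : ∀ i, f.eigenspace (ν i) ≤ LinearMap.ker (Polynomial.aeval f p) := by
      intro i m hm
      by_cases hbot : f.eigenspace (ν i) = ⊥
      · rw [hbot] at hm
        simp only [Submodule.mem_bot] at hm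
        simp [hm]
      · have hmem : ν i ∈ s := by simpa [hs] using hbot
        have hfm : f m = ν i • m := Module.End.mem_eigenspace_iff.1 hm
        rw [LinearMap.mem_ker, aux_aeval_apply_of_eigen hfm p, hp]
        rw [Finset.prod_eq_prod_diff_singleton_mul hmem]
        simp
    have : LinearMap.ker (Polynomial.aeval f p) = ⊤ := top_unique (h ▸ iSup_le hker)
    exact LinearMap.ker_eq_top.1 this
  exact (Module.End.isSemisimple_of_squarefree_aeval_eq_zero hsq haeval).isFinitelySemisimple

/-- Eigenvalues of a diagonalizable endomorphism lie in the prescribed set. -/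
lemma aux_eigenvalue_mem_range {K V ι : Type*} [Field K] [AddCommGroup V] [Module K V]
    {f : Module.End K V} {ν : ι → K} (h : ⨆ i, f.eigenspace (ν i) = ⊤)
    {c : K} (hc : f.eigenspace c ≠ ⊥) : ∃ i, c = ν i := by
  by_contra hcon
  push_neg at hcon
  have hdis : Disjoint (f.eigenspace c) (⨆ (j : K) (_ : j ≠ c), f.eigenspace j) :=
    f.eigenspaces_iSupIndep c
  have htop : (⨆ (j : K) (_ : j ≠ c), f.eigenspace j) = ⊤ := by
    refine top_unique (h ▸ iSup_le fun i => ?_)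
    exact le_iSup₂ (f := fun (j : K) (_ : j ≠ c) => f.eigenspace j) (ν i)
      (fun he => hcon i he.symm)
  rw [htop, disjoint_top] at hdis
  exact hc hdis

/-- Base change of an eigenspace lands in the eigenspace of the base change. -/
lemma aux_baseChange_eigenspace_le {V : Type*} [AddCommGroup V] [Module ℝ V]
    (f : Module.End ℝ V) (a : ℝ) :
    (f.eigenspace a).baseChange ℂ ≤ Module.End.eigenspace (f.baseChange ℂ) (a : ℂ) := by
  rw [Submodule.baseChange_eq_span, Submodule.span_le]
  rintro - ⟨m, hm, rfl⟩
  have hfm : f m = a • m := Module.End.mem_eigenspace_iff.1 hm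
  refine Module.End.mem_eigenspace_iff.2 ?_
  simp only [SetLike.mem_coe, TensorProduct.mk_apply, LinearMap.baseChange_tmul, hfm]
  rw [TensorProduct.tmul_smul, TensorProduct.smul_tmul', TensorProduct.smul_tmul']
  norm_num

lemma aux_baseChange_iSup_le {V ι : Type*} [AddCommGroup V] [Module ℝ V]
    (P : ι → Submodule ℝ V) :
    (⨆ i, P i).baseChange ℂ ≤ ⨆ i, (P i).baseChange ℂ := by
  rw [Submodule.baseChange_eq_span, Submodule.span_le]
  rintro - ⟨m, hm, rfl⟩
  refine Submodule.iSup_induction (motive := fun m => (TensorProduct.mk ℝ ℂ V 1) m ∈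
    ⨆ i, (P i).baseChange ℂ) P hm (fun i m hm => ?_) (by simp) (fun x y hx hy => ?_)
  · exact le_iSup (fun i => (P i).baseChange ℂ) i (Submodule.tmul_mem_baseChange_of_mem 1 hm)
  · simp only [map_add]; exact Submodule.add_mem _ hx hy

/-- Let `𝔤` be a finite-dimensional real Lie algebra, `𝔥 ⊆ 𝔤` a subalgebra, and
`X = X_a + X_m` with `ad X_a`, `ad X_m` commuting, `ad X_a` diagonalizable over `ℝ`,
and `ad X_m` diagonalizable over `ℂ` (after complexification) with purely imaginary
spectrum.  If `[X, 𝔥] ⊆ 𝔥` then `[X_a, 𝔥] ⊆ 𝔥` and `[X_m, 𝔥] ⊆ 𝔥`. -/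
theorem ad_parts_preserve_subalgebra
    {g : Type*} [LieRing g] [LieAlgebra ℝ g] [Module.Finite ℝ g]
    (h : LieSubalgebra ℝ g) (X Xa Xm : g)
    (hsum : X = Xa + Xm)
    (hcomm : Commute (LieAlgebra.ad ℝ g Xa) (LieAlgebra.ad ℝ g Xm))
    -- `ad X_a` is diagonalizable with real spectrum:
    (hXa : ⨆ μ : ℝ, Module.End.eigenspace (LieAlgebra.ad ℝ g Xa) μ = ⊤)
    -- `ad X_m` is diagonalizable over `ℂ`:
    (hXm : ⨆ μ : ℂ, Module.End.eigenspace
        (LinearMap.baseChange ℂ (LieAlgebra.ad ℝ g Xm : g →ₗ[ℝ] g)) μ = ⊤)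
    -- ... with purely imaginary spectrum:
    (hXmIm : ∀ μ : ℂ, Module.End.eigenspace
        (LinearMap.baseChange ℂ (LieAlgebra.ad ℝ g Xm : g →ₗ[ℝ] g)) μ ≠ ⊥ → μ.re = 0)
    (hX : ∀ y ∈ h, ⁅X, y⁆ ∈ h) :
    (∀ y ∈ h, ⁅Xa, y⁆ ∈ h) ∧ (∀ y ∈ h, ⁅Xm, y⁆ ∈ h) := by
  classical
  set A : Module.End ℝ g := LieAlgebra.ad ℝ g Xa with hA
  set B : Module.End ℝ g := LieAlgebra.ad ℝ g Xm with hB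
  set T : Module.End ℝ g := A + B with hTdef
  have hadX : LieAlgebra.ad ℝ g X = T := by rw [hsum]; exact map_add _ _ _
  have hT : ∀ y ∈ h, T y ∈ h := by
    intro y hy
    have := hX y hy
    rwa [← LieAlgebra.ad_apply (R := ℝ), hadX] at this
  have hTpow : ∀ y ∈ h, ∀ k : ℕ, (T ^ k) y ∈ h := by
    intro y hy k
    induction k with
    | zero => simpa
    | succ k ih =>
        rw [pow_succ', Module.End.mul_apply]
        exact hT _ ih
  -- it suffices to handle `Xa`
  suffices hmain : ∀ y ∈ h, A y ∈ h by
    refine ⟨fun y hy => hmain y hy, fun y hy => ?_⟩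
    have hBy : (⁅Xm, y⁆ : g) = T y - A y := by
      have hTy : T y = A y + B y := rfl
      rw [hTy]
      simp [hB, LieAlgebra.ad_apply]
    rw [hBy]
    exact sub_mem (hT y hy) (hmain y hy)
  -- complexify
  set Ac : Module.End ℂ (ℂ ⊗[ℝ] g) := A.baseChange ℂ with hAcdef
  set Bc : Module.End ℂ (ℂ ⊗[ℝ] g) := B.baseChange ℂ with hBcdef
  set Tc : Module.End ℂ (ℂ ⊗[ℝ] g) := T.baseChange ℂ with hTcdef
  have hTc : Tc = Ac + Bc := LinearMap.baseChange_add A B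
  have hcommc : Commute Ac Bc := by
    show Ac * Bc = Bc * Ac
    rw [hAcdef, hBcdef, ← LinearMap.baseChange_mul, ← LinearMap.baseChange_mul, hcomm.eq]
  have hAc : ⨆ a : ℝ, Module.End.eigenspace Ac (a : ℂ) = ⊤ := by
    rw [eq_top_iff]
    calc (⊤ : Submodule ℂ (ℂ ⊗[ℝ] g)) = (⊤ : Submodule ℝ g).baseChange ℂ :=
          (Submodule.baseChange_top ℂ (R := ℝ) (M := g)).symm
      _ = (⨆ a : ℝ, Module.End.eigenspace A a).baseChange ℂ := by rw [hXa]
      _ ≤ ⨆ a : ℝ, (Module.End.eigenspace A a).baseChange ℂ := aux_baseChange_iSup_le _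
      _ ≤ ⨆ a : ℝ, Module.End.eigenspace Ac (a : ℂ) :=
          iSup_mono fun a => aux_baseChange_eigenspace_le A a
  have hBc : ⨆ b : ℂ, Module.End.eigenspace Bc b = ⊤ := hXm
  -- the commuting family
  set F : Bool → Module.End ℂ (ℂ ⊗[ℝ] g) := fun i => if i then Ac else Bc with hF
  have hFt : F true = Ac := rfl
  have hFf : F false = Bc := rfl
  have hpair : Pairwise fun i j => Commute (F i) (F j) := by
    intro i j hij
    cases i <;> cases j
    · exact absurd rfl hij
    · simpa [hF] using hcommc.symm
    · simpa [hF] using hcommc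
    · exact absurd rfl hij
  have hmaxtop : ∀ i, ⨆ μ : ℂ, (F i).maxGenEigenspace μ = ⊤ := by
    intro i
    have key : ∀ (f : Module.End ℂ (ℂ ⊗[ℝ] g)) {ι : Type} (ν : ι → ℂ),
        (⨆ j, f.eigenspace (ν j)) = ⊤ → ⨆ μ : ℂ, f.maxGenEigenspace μ = ⊤ := by
      intro f ι ν hν
      rw [eq_top_iff, ← hν]
      refine iSup_le fun j => le_iSup_of_le (ν j) ?_
      exact (f.genEigenspace (ν j)).monotone le_top
    cases i
    · rw [hFf]; exact key Bc id hBc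
    · rw [hFt]; exact key Ac (fun a : ℝ => (a : ℂ)) hAc
  have hsim : ⨆ χ : Bool → ℂ, ⨅ i, (F i).maxGenEigenspace (χ i) = ⊤ :=
    Module.End.iSup_iInf_maxGenEigenspace_eq_top_of_iSup_maxGenEigenspace_eq_top_of_commute
      F hpair hmaxtop
  have hindep : iSupIndep fun χ : Bool → ℂ => ⨅ i, (F i).maxGenEigenspace (χ i) := by
    refine Module.End.independent_iInf_maxGenEigenspace_of_forall_mapsTo F fun i j φ => ?_
    refine Module.End.mapsTo_maxGenEigenspace_of_comm ?_ φ
    rcases eq_or_ne i j with rfl | hij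
    · rfl
    · exact hpair hij.symm
  -- semisimplicity
  have hAss : Ac.IsFinitelySemisimple :=
    aux_isFinitelySemisimple_of_iSup_eigenspace (fun a : ℝ => (a : ℂ)) hAc
  have hBss : Bc.IsFinitelySemisimple := aux_isFinitelySemisimple_of_iSup_eigenspace id hBc
  -- eigen-action on the simultaneous pieces
  have hpiece : ∀ χ : Bool → ℂ, ∀ m ∈ (⨅ i, (F i).maxGenEigenspace (χ i)),
      Ac m = χ true • m ∧ Bc m = χ false • m := by
    intro χ m hm
    have hmA : m ∈ Ac.maxGenEigenspace (χ true) := by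
      have := (iInf_le (fun i => (F i).maxGenEigenspace (χ i)) true) hm
      rwa [hFt] at this
    have hmB : m ∈ Bc.maxGenEigenspace (χ false) := by
      have := (iInf_le (fun i => (F i).maxGenEigenspace (χ i)) false) hm
      rwa [hFf] at this
    rw [hAss.maxGenEigenspace_eq_eigenspace] at hmA
    rw [hBss.maxGenEigenspace_eq_eigenspace] at hmB
    exact ⟨Module.End.mem_eigenspace_iff.1 hmA, Module.End.mem_eigenspace_iff.1 hmB⟩
  -- the interpolation polynomial
  have hfinχ : {χ : Bool → ℂ | (⨅ i, (F i).maxGenEigenspace (χ i)) ≠ ⊥}.Finite :=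
    Submodule.finite_ne_bot_of_iSupIndep hindep
  set S : Finset ℂ := hfinχ.toFinset.image (fun χ => χ true + χ false) with hS
  set p : Polynomial ℂ := Lagrange.interpolate S id (fun z : ℂ => (z.re : ℂ)) with hpdef
  have hinj : Set.InjOn id (S : Set ℂ) := fun a _ b _ hab => hab
  have hpeval : ∀ z ∈ S, p.eval z = (z.re : ℂ) := fun z hz =>
    Lagrange.eval_interpolate_at_node _ hinj hz
  -- the key identity `Ac = p(Tc)`
  have hker : ∀ χ : Bool → ℂ, (⨅ i, (F i).maxGenEigenspace (χ i)) ≤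
      LinearMap.ker (Ac - Polynomial.aeval Tc p) := by
    intro χ m hm
    by_cases hbot : (⨅ i, (F i).maxGenEigenspace (χ i)) = ⊥
    · rw [hbot] at hm
      simp only [Submodule.mem_bot] at hm
      simp [hm]
    · obtain ⟨hmA, hmB⟩ := hpiece χ m hm
      have hmT : Tc m = (χ true + χ false) • m := by
        rw [hTc, LinearMap.add_apply, hmA, hmB, add_smul]
      have hnode : χ true + χ false ∈ S :=
        Finset.mem_image.2 ⟨χ, hfinχ.mem_toFinset.2 hbot, rfl⟩
      obtain ⟨m₀, hm₀, hm₀ne⟩ := Submodule.exists_mem_ne_zero_of_ne_bot hbot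
      obtain ⟨hA0, hB0⟩ := hpiece χ m₀ hm₀
      have hEA : Module.End.eigenspace Ac (χ true) ≠ ⊥ := by
        intro hc
        apply hm₀ne
        have hmem : m₀ ∈ Module.End.eigenspace Ac (χ true) :=
          Module.End.mem_eigenspace_iff.2 hA0
        rw [hc] at hmem
        simpa using hmem
      have hEB : Module.End.eigenspace Bc (χ false) ≠ ⊥ := by
        intro hc
        apply hm₀ne
        have hmem : m₀ ∈ Module.End.eigenspace Bc (χ false) :=
          Module.End.mem_eigenspace_iff.2 hB0
        rw [hc] at hmem
        simpa using hmem
      obtain ⟨a, ha⟩ := aux_eigenvalue_mem_range hAc hEA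
      have hb : (χ false).re = 0 := hXmIm _ hEB
      have hre : (((χ true + χ false).re : ℝ) : ℂ) = χ true := by
        rw [ha]
        simp [Complex.add_re, hb]
      rw [LinearMap.mem_ker, LinearMap.sub_apply, aux_aeval_apply_of_eigen hmT p,
        hpeval _ hnode, hre, hmA, sub_self]
  have key : Ac = Polynomial.aeval Tc p := by
    have hker_top : LinearMap.ker (Ac - Polynomial.aeval Tc p) = ⊤ :=
      top_unique (hsim ▸ iSup_le hker)
    have := LinearMap.ker_eq_top.1 hker_top
    rwa [sub_eq_zero] at this
  -- descend to `g`
  intro y hy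
  set φ : (ℂ ⊗[ℝ] g) →ₗ[ℝ] g := TensorProduct.lift ((LinearMap.lsmul ℝ g).comp Complex.reLm)
    with hφdef
  have hφ : ∀ (z : ℂ) (v : g), φ (z ⊗ₜ[ℝ] v) = z.re • v := fun z v => rfl
  have h1 : (1 : ℂ) ⊗ₜ[ℝ] (A y) = (Polynomial.aeval Tc) p ((1 : ℂ) ⊗ₜ[ℝ] y) := by
    rw [← key, hAcdef]
    exact (LinearMap.baseChange_tmul A 1 y).symm
  rw [Polynomial.aeval_eq_sum_range] at h1
  have h2 : ∀ i : ℕ, (Tc ^ i) ((1 : ℂ) ⊗ₜ[ℝ] y) = (1 : ℂ) ⊗ₜ[ℝ] ((T ^ i) y) := by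
    intro i
    rw [hTcdef, ← LinearMap.baseChange_pow]
    exact LinearMap.baseChange_tmul (T ^ i) 1 y
  have h3 : A y = ∑ i ∈ Finset.range (p.natDegree + 1), (p.coeff i).re • (T ^ i) y := by
    have h4 := congrArg φ h1
    simp only [LinearMap.sum_apply, LinearMap.smul_apply, h2, TensorProduct.smul_tmul',
      map_sum, hφ, smul_eq_mul, mul_one] at h4
    simpa [hφ] using h4
  have hgoal : A y ∈ h := by
    rw [h3]
    exact sum_mem fun i _ => h.smul_mem _ (hTpow y hy i)
  exact hgoal
end
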